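/- Let L > 0, let γ, T, N : ℝ → ℝ² be smooth L-periodic maps and κ : ℝ → ℝ a smooth L-periodic function with κ(σ) > 0 for all σ, satisfying γ'(σ) = T(σ), N'(σ) = −κ(σ)·T(σ), and T(σ) ∧ N(σ) = 1 for all σ. Let e := γ + κ⁻¹·N be the Minkowski evolute. Then L² ≤ 2 (∫₀ᴸ κ(σ) dσ) ( 𝒜(γ) − 𝒜(e) ). -/

import Mathlib

/-- The wedge product `(a,b) ∧ (c,d) = ad − bc` of two plane vectors. -/
def wedge (v w : ℝ × ℝ) : ℝ := v.1 * w.2 - v.2 * w.1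

/-- The signed Euclidean area `𝒜(c) = (1/2)∫₀ᴸ c ∧ c' dσ` of an `L`-periodic plane curve. -/
noncomputable def signedArea (L : ℝ) (c : ℝ → ℝ × ℝ) : ℝ :=
  (1 / 2) * ∫ σ in (0:ℝ)..L, wedge (c σ) (deriv c σ)

theorem length_sq_le_evolute_area_bound (L : ℝ) (hL : 0 < L)
    (γ T N : ℝ → ℝ × ℝ) (κ : ℝ → ℝ)
    (hγ : ContDiff ℝ (⊤ : ℕ∞) γ) (hT : ContDiff ℝ (⊤ : ℕ∞) T) (hN : ContDiff ℝ (⊤ : ℕ∞) N)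
    (hκ : ContDiff ℝ (⊤ : ℕ∞) κ)
    (hγp : Function.Periodic γ L) (hTp : Function.Periodic T L)
    (hNp : Function.Periodic N L) (hκp : Function.Periodic κ L)
    (hκpos : ∀ σ, 0 < κ σ)
    (hγ' : ∀ σ, deriv γ σ = T σ)
    (hN' : ∀ σ, deriv N σ = -(κ σ) • T σ)
    (hTN : ∀ σ, wedge (T σ) (N σ) = 1) :
    L ^ 2 ≤ 2 * (∫ σ in (0:ℝ)..L, κ σ) *
      (signedArea L γ - signedArea L (fun σ => γ σ + (κ σ)⁻¹ • N σ)) := by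
  have hκne : ∀ σ, κ σ ≠ 0 := fun σ => (hκpos σ).ne'
  set ι : ℝ → ℝ := fun σ => (κ σ)⁻¹ with hιdef
  set ι' : ℝ → ℝ := fun σ => -(deriv κ σ) / (κ σ) ^ 2 with hι'def
  set e : ℝ → ℝ × ℝ := fun σ => γ σ + (κ σ)⁻¹ • N σ with hedef
  -- basic derivative facts
  have hκd : ∀ σ, HasDerivAt κ (deriv κ σ) σ :=
    fun σ => (hκ.differentiable (by simp) σ).hasDerivAt
  have hιd : ∀ σ, HasDerivAt ι (ι' σ) σ := fun σ => (hκd σ).inv (hκne σ)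
  have hγd : ∀ σ, HasDerivAt γ (T σ) σ := by
    intro σ
    have := (hγ.differentiable (by simp) σ).hasDerivAt
    rwa [hγ' σ] at this
  have hNd : ∀ σ, HasDerivAt N (-(κ σ) • T σ) σ := by
    intro σ
    have := (hN.differentiable (by simp) σ).hasDerivAt
    rwa [hN' σ] at this
  -- derivative of the evolute
  have hed : ∀ σ, HasDerivAt e (ι' σ • N σ) σ := by
    intro σ
    have h := (hγd σ).add ((hιd σ).smul (hNd σ))
    have key : T σ + (ι σ • (-(κ σ) • T σ) + ι' σ • N σ) = ι' σ • N σ := by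
      have h1 : ι σ • (-(κ σ) • T σ) = -T σ := by
        rw [smul_smul]
        have : ι σ * -(κ σ) = -1 := by
          simp only [hιdef]
          rw [mul_neg, inv_mul_cancel₀ (hκne σ)]
        rw [this, neg_one_smul]
      rw [h1]; abel
    rw [key] at h
    exact h
  have hde : deriv e = fun σ => ι' σ • N σ := funext fun σ => (hed σ).deriv
  have hdγ : deriv γ = T := funext hγ'
  -- the auxiliary function F = ι * (γ ∧ N)
  set F : ℝ → ℝ := fun σ => ι σ * wedge (γ σ) (N σ) with hFdef
  set g : ℝ → ℝ := fun σ => ι' σ * wedge (γ σ) (N σ) + ι σ - wedge (γ σ) (T σ)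
    with hgdef
  have hFd : ∀ σ, HasDerivAt F (g σ) σ := by
    intro σ
    have hγ1 : HasDerivAt (fun σ => (γ σ).1) ((T σ).1) σ := by
      exact ((ContinuousLinearMap.fst ℝ ℝ ℝ).hasFDerivAt.comp_hasDerivAt σ (hγd σ))
    have hγ2 : HasDerivAt (fun σ => (γ σ).2) ((T σ).2) σ := by
      exact ((ContinuousLinearMap.snd ℝ ℝ ℝ).hasFDerivAt.comp_hasDerivAt σ (hγd σ))
    have hN1 : HasDerivAt (fun σ => (N σ).1) ((-(κ σ) • T σ).1) σ := by
      exact ((ContinuousLinearMap.fst ℝ ℝ ℝ).hasFDerivAt.comp_hasDerivAt σ (hNd σ))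
    have hN2 : HasDerivAt (fun σ => (N σ).2) ((-(κ σ) • T σ).2) σ := by
      exact ((ContinuousLinearMap.snd ℝ ℝ ℝ).hasFDerivAt.comp_hasDerivAt σ (hNd σ))
    have hW : HasDerivAt (fun σ => wedge (γ σ) (N σ))
        ((T σ).1 * (N σ).2 + (γ σ).1 * (-(κ σ) • T σ).2
          - ((T σ).2 * (N σ).1 + (γ σ).2 * (-(κ σ) • T σ).1)) σ := by
      exact ((hγ1.mul hN2).sub (hγ2.mul hN1))
    have h := (hιd σ).mul hW
    refine h.congr_deriv ?_; symm
    have hTN' := hTN σ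
    have h2 : (κ σ)⁻¹ * κ σ = 1 := inv_mul_cancel₀ (hκne σ)
    simp only [hgdef, hιdef, wedge, Prod.smul_fst, Prod.smul_snd, smul_eq_mul] at hTN' ⊢
    linear_combination (-(κ σ)⁻¹) * hTN' +
      ((γ σ).1 * (T σ).2 - (γ σ).2 * (T σ).1) * h2
  -- key pointwise identity
  have hpt : ∀ σ, wedge (γ σ) (deriv γ σ) - wedge (e σ) (deriv e σ) = ι σ - g σ := by
    intro σ
    rw [hdγ, hde]
    simp only [hgdef, hedef, wedge, Prod.fst_add, Prod.snd_add, Prod.smul_fst,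
      Prod.smul_snd, smul_eq_mul, hιdef]
    ring
  -- continuity facts
  have hκc : Continuous κ := hκ.continuous
  have hιc : Continuous ι := hκc.inv₀ hκne
  have hι'c : Continuous ι' := by
    have := hκ.continuous_deriv (by simp)
    exact (this.neg.div (hκc.pow 2) (fun σ => pow_ne_zero 2 (hκne σ)))
  have hγc : Continuous γ := hγ.continuous
  have hNc : Continuous N := hN.continuous
  have hTc : Continuous T := hT.continuous
  have hwc : ∀ (u v : ℝ → ℝ × ℝ), Continuous u → Continuous v →
      Continuous (fun σ => wedge (u σ) (v σ)) := by
    intro u v hu hv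
    simp only [wedge]
    exact ((hu.fst.mul hv.snd).sub (hu.snd.mul hv.fst))
  have hgc : Continuous g := by
    exact ((hι'c.mul (hwc γ N hγc hNc)).add hιc).sub (hwc γ T hγc hTc)
  -- ∫ g = F L - F 0 = 0
  have hintg : IntervalIntegrable g MeasureTheory.volume 0 L :=
    hgc.intervalIntegrable 0 L
  have hFLF0 : F L = F 0 := by
    simp only [hFdef, hιdef]
    have h1 := hγp 0
    have h2 := hNp 0
    have h3 := hκp 0
    simp only [zero_add] at h1 h2 h3
    rw [h1, h2, h3]
  have hIg : (∫ σ in (0:ℝ)..L, g σ) = 0 := by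
    rw [intervalIntegral.integral_eq_sub_of_hasDerivAt (fun x _ => hFd x) hintg,
      hFLF0, sub_self]
  -- area computation
  have hintι : IntervalIntegrable ι MeasureTheory.volume 0 L :=
    hιc.intervalIntegrable 0 L
  have hintγw : IntervalIntegrable (fun σ => wedge (γ σ) (deriv γ σ))
      MeasureTheory.volume 0 L := by
    rw [hdγ]; exact (hwc γ T hγc hTc).intervalIntegrable 0 L
  have hintew : IntervalIntegrable (fun σ => wedge (e σ) (deriv e σ))
      MeasureTheory.volume 0 L := by
    rw [hde]
    exact (hwc e (fun σ => ι' σ • N σ) (hγc.add (hιc.smul hNc))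
      (hι'c.smul hNc)).intervalIntegrable 0 L
  have harea : signedArea L γ - signedArea L e = (1 / 2) * ∫ σ in (0:ℝ)..L, ι σ := by
    have h1 : signedArea L γ - signedArea L e
        = (1 / 2) * ∫ σ in (0:ℝ)..L,
            (wedge (γ σ) (deriv γ σ) - wedge (e σ) (deriv e σ)) := by
      rw [intervalIntegral.integral_sub hintγw hintew]
      simp only [signedArea]
      ring
    rw [h1]
    congr 1
    rw [intervalIntegral.integral_congr (g := fun σ => ι σ - g σ)
        (fun σ _ => hpt σ),
      intervalIntegral.integral_sub hintι hintg, hIg, sub_zero]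
  -- final inequality
  set A : ℝ := ∫ σ in (0:ℝ)..L, κ σ with hAdef
  set B : ℝ := ∫ σ in (0:ℝ)..L, ι σ with hBdef
  have hB : 0 < B :=
    intervalIntegral.intervalIntegral_pos_of_pos hintι
      (fun σ => inv_pos.mpr (hκpos σ)) hL
  -- pointwise: 2*L*B ≤ B^2 * κ σ + L^2 * ι σ
  have hptineq : ∀ σ, 2 * L * B ≤ B ^ 2 * κ σ + L ^ 2 * ι σ := by
    intro σ
    have hκισ : κ σ * ι σ = 1 := mul_inv_cancel₀ (hκne σ)
    have hιpos : 0 < ι σ := inv_pos.mpr (hκpos σ)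
    have h3 : (B * κ σ - L) ^ 2 * ι σ = B ^ 2 * κ σ - 2 * L * B + L ^ 2 * ι σ := by
      linear_combination (B ^ 2 * κ σ - 2 * L * B) * hκισ
    nlinarith [mul_nonneg (sq_nonneg (B * κ σ - L)) hιpos.le, h3]
  have hintκ : IntervalIntegrable κ MeasureTheory.volume 0 L :=
    hκc.intervalIntegrable 0 L
  have hint2 : IntervalIntegrable (fun σ => B ^ 2 * κ σ + L ^ 2 * ι σ)
      MeasureTheory.volume 0 L :=
    (hintκ.const_mul _).add (hintι.const_mul _)
  have hmono := intervalIntegral.integral_mono_on hL.le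
    ((intervalIntegrable_const : IntervalIntegrable (fun _ => 2 * L * B) _ 0 L))
    hint2 (fun σ _ => hptineq σ)
  rw [intervalIntegral.integral_const] at hmono
  rw [intervalIntegral.integral_add (hintκ.const_mul _) (hintι.const_mul _),
    intervalIntegral.integral_const_mul, intervalIntegral.integral_const_mul] at hmono
  simp only [smul_eq_mul, sub_zero, ← hAdef, ← hBdef] at hmono
  -- hmono : L * (2 * L * B) ≤ B^2 * A + L^2 * B
  have hLB : L ^ 2 * B ≤ (A * B) * B := by nlinarith
  have hfinal : L ^ 2 ≤ A * B := le_of_mul_le_mul_right hLB hB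
  rw [harea]
  calc L ^ 2 ≤ A * B := hfinal
    _ = 2 * A * ((1/2) * B) := by ring
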